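/- Let B be a real n×n matrix with det B ≥ 0, and let R be the unique symmetric positive semidefinite square root of Bᵀ B. Then: (i) there exists Q ∈ SO(n) with Q R = B; (ii) for every Q ∈ SO(n), trace(Qᵀ B) ≤ trace(R); and (iii) Q ∈ SO(n) satisfies trace(Qᵀ B) = trace(R) if and only if Q R = B. Hence the maximizers of Q ↦ trace(Qᵀ B) over SO(n) are exactly the special orthogonal polar factors of B. -/

import Mathlib

/-!
Since `Rᵀ R = Bᵀ B`, we have `‖R x‖ = ‖B x‖` for every `x`, so `R x ↦ B x` is a well-defined linear
isometry on the range of `R`; extending it to the whole space gives an orthogonal `Q` with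
`Q R = B`. If `det Q = -1`, then `det B = -det R` together with `det B ≥ 0` and `det R ≥ 0`
forces `R` to be singular, and composing `Q` with the reflection in a vector `v` with `vᵀ R = 0`
corrects the sign.

For the trace, write `R = X Xᵀ`. For orthogonal `P` the Frobenius norm identity
`‖X - P X‖² = 2 (tr R - tr (P R))` gives `tr (P R) ≤ tr R`, with equality iff `P X = X`, i.e.
iff `P R = R`. Taking `P = Qᵀ Q₀` for the polar factor `Q₀` gives (ii) and (iii).
-/

open Matrix

theorem LinearMap.exists_linearIsometry_comp_eq_of_norm_eq {𝕜 E F : Type*} [RCLike 𝕜]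
    [NormedAddCommGroup E] [InnerProductSpace 𝕜 E] [FiniteDimensional 𝕜 E]
    [AddCommGroup F] [Module 𝕜 F] (S T : F →ₗ[𝕜] E) (h : ∀ x, ‖S x‖ = ‖T x‖) :
    ∃ U : E →ₗᵢ[𝕜] E, U.toLinearMap ∘ₗ S = T := by
  have hker : ker S ≤ ker T := fun x hx => by
    rw [mem_ker, ← norm_eq_zero, ← h, norm_eq_zero]
    exact hx
  let g : range S →ₗ[𝕜] E := (ker S).liftQ T hker ∘ₗ S.quotKerEquivRange.symm.toLinearMap
  have hg (x : F) : g ⟨S x, mem_range_self S x⟩ = T x := by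
    simp [g, quotKerEquivRange_symm_apply_image]
  let L : range S →ₗᵢ[𝕜] E :=
    { toLinearMap := g
      norm_map' := by
        rintro ⟨_, x, rfl⟩
        rw [hg, Submodule.coe_norm, h] }
  exact ⟨L.extend, LinearMap.ext fun x => (L.extend_apply ⟨S x, _⟩).trans (hg x)⟩

namespace Matrix

variable {n : Type*} [Fintype n] [DecidableEq n]

theorem exists_mem_unitaryGroup_mul_eq_of_conjTranspose_mul_self_eq {𝕜 : Type*} [RCLike 𝕜]
    {A B : Matrix n n 𝕜} (h : Aᴴ * A = Bᴴ * B) : ∃ U ∈ unitaryGroup n 𝕜, U * A = B := by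
  set e := toEuclideanCLM (n := n) (𝕜 := 𝕜)
  have hAB : (e A).adjoint ∘L e A = (e B).adjoint ∘L e B := by
    simpa only [← ContinuousLinearMap.star_eq_adjoint, ← ContinuousLinearMap.mul_def, ← map_star,
      ← map_mul, star_eq_conjTranspose] using congrArg e h
  have hnorm (x : EuclideanSpace 𝕜 n) : ‖e A x‖ = ‖e B x‖ := by
    rw [← sq_eq_sq₀ (norm_nonneg _) (norm_nonneg _),
      ContinuousLinearMap.apply_norm_sq_eq_inner_adjoint_right,
      ContinuousLinearMap.apply_norm_sq_eq_inner_adjoint_right, hAB]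
  obtain ⟨V, hV⟩ := LinearMap.exists_linearIsometry_comp_eq_of_norm_eq
    (e A : EuclideanSpace 𝕜 n →ₗ[𝕜] EuclideanSpace 𝕜 n) (e B) hnorm
  refine ⟨e.symm V.toContinuousLinearMap, ?_, ?_⟩
  · rw [mem_unitaryGroup_iff']
    apply EquivLike.injective e
    simp only [map_mul, map_star, StarAlgEquiv.apply_symm_apply]
    rw [map_one, ContinuousLinearMap.star_eq_adjoint, ContinuousLinearMap.mul_def,
      V.adjoint_comp_self]
  · apply EquivLike.injective e
    simp only [map_mul, StarAlgEquiv.apply_symm_apply]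
    ext1 x
    exact LinearMap.congr_fun hV x

theorem exists_mem_orthogonalGroup_mul_eq_of_transpose_mul_self_eq {A B : Matrix n n ℝ}
    (h : Aᵀ * A = Bᵀ * B) : ∃ Q ∈ orthogonalGroup n ℝ, Q * A = B :=
  exists_mem_unitaryGroup_mul_eq_of_conjTranspose_mul_self_eq (by simpa using h)

section Householder

noncomputable def householder (v : n → ℝ) : Matrix n n ℝ := 1 - (2 / (v ⬝ᵥ v)) • vecMulVec v v

variable {v : n → ℝ}

theorem householder_mem_orthogonalGroup (hv : v ≠ 0) : householder v ∈ orthogonalGroup n ℝ := by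
  have hvv : v ⬝ᵥ v ≠ 0 := by simpa [dotProduct_self_eq_zero] using hv
  have hsymm : (householder v)ᵀ = householder v := by
    simp [householder, transpose_vecMulVec]
  rw [mem_orthogonalGroup_iff', hsymm, householder]
  simp only [Matrix.sub_mul, Matrix.mul_sub, Matrix.one_mul, Matrix.mul_one, Matrix.smul_mul,
    Matrix.mul_smul, vecMulVec_mul_vecMulVec, vecMulVec_smul, smul_smul]
  rw [div_mul_cancel₀ 2 hvv]
  module

theorem det_householder (hv : v ≠ 0) : (householder v).det = -1 := by
  have hvv : v ⬝ᵥ v ≠ 0 := by simpa [dotProduct_self_eq_zero] using hv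
  have : householder v = 1 + replicateCol Unit (-(2 / (v ⬝ᵥ v)) • v) * replicateRow Unit v := by
    rw [← vecMulVec_eq, householder, smul_vecMulVec, neg_smul, ← sub_eq_add_neg]
  rw [this, det_one_add_replicateCol_mul_replicateRow, dotProduct_smul, smul_eq_mul, neg_mul,
    div_mul_cancel₀ 2 hvv]
  norm_num

theorem householder_mul_of_vecMul_eq_zero {m : Type*} {A : Matrix n m ℝ} (hA : v ᵥ* A = 0) :
    householder v * A = A := by
  rw [householder, Matrix.sub_mul, Matrix.one_mul, Matrix.smul_mul, vecMulVec_mul, hA]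
  ext
  simp [vecMulVec_apply]

end Householder

theorem exists_mem_specialOrthogonalGroup_mul_eq {B R : Matrix n n ℝ} (hdet : 0 ≤ B.det)
    (hR : R.PosSemidef) (hRR : R * R = Bᵀ * B) :
    ∃ Q ∈ specialOrthogonalGroup n ℝ, Q * R = B := by
  have hRt : Rᵀ = R := by simpa using hR.isHermitian.eq
  obtain ⟨Q, hQ, hQR⟩ := exists_mem_orthogonalGroup_mul_eq_of_transpose_mul_self_eq
    (by rwa [hRt] : Rᵀ * R = Bᵀ * B)
  have hdetQ : Q.det * Q.det = 1 := by
    simpa using congrArg det ((mem_orthogonalGroup_iff' n ℝ).mp hQ)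
  rcases mul_self_eq_one_iff.mp hdetQ with hQ1 | hQ1
  · exact ⟨Q, mem_specialOrthogonalGroup_iff.mpr ⟨hQ, hQ1⟩, hQR⟩
  · have hdetR : R.det = 0 := by
      have hBR : B.det = -R.det := by rw [← hQR, det_mul, hQ1, neg_one_mul]
      linarith [hR.det_nonneg]
    obtain ⟨v, hv, hvR⟩ := exists_vecMul_eq_zero_iff.mpr hdetR
    refine ⟨Q * householder v, mem_specialOrthogonalGroup_iff.mpr
      ⟨mul_mem hQ (householder_mem_orthogonalGroup hv), ?_⟩, ?_⟩
    · rw [det_mul, hQ1, det_householder hv, neg_one_mul, neg_neg]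
    · rw [Matrix.mul_assoc, householder_mul_of_vecMul_eq_zero hvR, hQR]

theorem trace_transpose_mul_self_sub_mul {α m : Type*} [CommRing α] [Fintype m]
    {P : Matrix n n α} (hP : P ∈ orthogonalGroup n α) (X : Matrix n m α) :
    ((X - P * X)ᵀ * (X - P * X)).trace = 2 * ((X * Xᵀ).trace - (P * (X * Xᵀ)).trace) := by
  rw [mem_orthogonalGroup_iff'] at hP
  have hPP : Xᵀ * Pᵀ * (P * X) = Xᵀ * X := by
    rw [Matrix.mul_assoc, ← Matrix.mul_assoc Pᵀ, hP, Matrix.one_mul]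
  have hsym : (Xᵀ * Pᵀ * X).trace = (Xᵀ * (P * X)).trace := by
    rw [← trace_transpose, transpose_mul, transpose_mul, transpose_transpose, transpose_transpose]
  rw [transpose_sub, transpose_mul, Matrix.sub_mul, Matrix.mul_sub, Matrix.mul_sub, hPP,
    trace_sub, trace_sub, trace_sub, hsym, trace_mul_comm Xᵀ X, trace_mul_comm Xᵀ (P * X),
    Matrix.mul_assoc]
  ring

open scoped MatrixOrder in
theorem PosSemidef.exists_eq_mul_transpose {R : Matrix n n ℝ} (hR : R.PosSemidef) :
    ∃ X : Matrix n n ℝ, R = X * Xᵀ := by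
  obtain ⟨C, rfl⟩ := CStarAlgebra.nonneg_iff_eq_star_mul_self.mp hR.nonneg
  exact ⟨Cᵀ, by simp [star_eq_conjTranspose]⟩

theorem PosSemidef.trace_mul_le_trace {R P : Matrix n n ℝ} (hR : R.PosSemidef)
    (hP : P ∈ orthogonalGroup n ℝ) : (P * R).trace ≤ R.trace := by
  obtain ⟨X, rfl⟩ := hR.exists_eq_mul_transpose
  have hsq := (posSemidef_conjTranspose_mul_self (X - P * X)).trace_nonneg
  rw [conjTranspose_eq_transpose_of_trivial, trace_transpose_mul_self_sub_mul hP] at hsq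
  linarith

theorem PosSemidef.trace_mul_eq_trace_iff {R P : Matrix n n ℝ} (hR : R.PosSemidef)
    (hP : P ∈ orthogonalGroup n ℝ) : (P * R).trace = R.trace ↔ P * R = R := by
  refine ⟨fun h => ?_, fun h => by rw [h]⟩
  obtain ⟨X, rfl⟩ := hR.exists_eq_mul_transpose
  have hPX : X - P * X = 0 := by
    rw [← trace_conjTranspose_mul_self_eq_zero_iff, conjTranspose_eq_transpose_of_trivial,
      trace_transpose_mul_self_sub_mul hP, h, sub_self, mul_zero]
  rw [← Matrix.mul_assoc, ← sub_eq_zero.mp hPX]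

theorem transpose_mul_eq_iff_eq_mul {α : Type*} [CommRing α] {Q M N : Matrix n n α}
    (hQ : Q ∈ orthogonalGroup n α) : Qᵀ * M = N ↔ M = Q * N := by
  constructor
  · rintro rfl
    rw [← Matrix.mul_assoc, (mem_orthogonalGroup_iff n α).mp hQ, Matrix.one_mul]
  · rintro rfl
    rw [← Matrix.mul_assoc, (mem_orthogonalGroup_iff' n α).mp hQ, Matrix.one_mul]

end Matrix

/-- Part of the paper's Proposition 1 (case `det B ≥ 0`): with `R` the unique
symmetric positive semidefinite square root of `Bᵀ B`, (i) there is a special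
orthogonal polar factor `Q` with `Q R = B`; (ii) `trace(Qᵀ B) ≤ trace R` for
all `Q ∈ SO(n)`; (iii) equality holds exactly for the special orthogonal
polar factors of `B`. -/
theorem stmt7 {n : ℕ} (B R : Matrix (Fin n) (Fin n) ℝ) (hdet : 0 ≤ B.det)
    (hR : R.PosSemidef) (hRR : R * R = Bᵀ * B) :
    (∃ Q : Matrix (Fin n) (Fin n) ℝ, Qᵀ * Q = 1 ∧ Q.det = 1 ∧ Q * R = B)
    ∧ (∀ Q : Matrix (Fin n) (Fin n) ℝ, Qᵀ * Q = 1 → Q.det = 1 →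
        (Qᵀ * B).trace ≤ R.trace)
    ∧ (∀ Q : Matrix (Fin n) (Fin n) ℝ, Qᵀ * Q = 1 → Q.det = 1 →
        ((Qᵀ * B).trace = R.trace ↔ Q * R = B)) := by
  obtain ⟨Q₀, ⟨hQ₀, hdetQ₀⟩, rfl⟩ := exists_mem_specialOrthogonalGroup_mul_eq hdet hR hRR
  have hP {Q : Matrix (Fin n) (Fin n) ℝ} (hQ : Qᵀ * Q = 1) :
      Qᵀ * Q₀ ∈ orthogonalGroup (Fin n) ℝ :=
    mul_mem (transpose_mem_unitaryGroup_iff.mpr ((mem_orthogonalGroup_iff' _ _).mpr hQ)) hQ₀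
  refine ⟨⟨Q₀, (mem_orthogonalGroup_iff' _ _).mp hQ₀, hdetQ₀, rfl⟩, fun Q hQ _ => ?_,
    fun Q hQ _ => ?_⟩
  · rw [← Matrix.mul_assoc]
    exact hR.trace_mul_le_trace (hP hQ)
  · rw [← Matrix.mul_assoc, hR.trace_mul_eq_trace_iff (hP hQ), Matrix.mul_assoc,
      transpose_mul_eq_iff_eq_mul ((mem_orthogonalGroup_iff' _ _).mpr hQ), eq_comm]
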